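/- For every integer m ≥ 3, the quaternion group Q8 admits an m-GRR. (In fact, the automorphism group of the explicitly constructed graph Δ on Q8×{0,…,m−1} described below is exactly the group of right translations by Q8.) -/

import Mathlib

/-- A permutation `σ` of the vertex set is an automorphism of the simple graph `Γ`. -/
def IsGraphAut {V : Type*} (Γ : SimpleGraph V) (σ : Equiv.Perm V) : Prop :=
  ∀ u v : V, Γ.Adj (σ u) (σ v) ↔ Γ.Adj u v

/-- `G` admits an `m`-graphical regular representation: a regular finite simple graph whose
full automorphism group is (the image of) `G`, acting semiregularly with exactly `m` orbits. -/
def HasMGRR (G : Type*) [Group G] (m : ℕ) : Prop :=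
  ∃ (V : Type) (_ : Fintype V) (Γ : SimpleGraph V) (ρ : G →* Equiv.Perm V),
    (∃ d : ℕ, ∀ v : V, (Γ.neighborSet v).ncard = d) ∧
    (∀ g : G, IsGraphAut Γ (ρ g)) ∧
    (∀ σ : Equiv.Perm V, IsGraphAut Γ σ → ∃ g : G, ρ g = σ) ∧
    Function.Injective ⇑ρ ∧
    (∀ (g : G) (v : V), ρ g v = v → g = 1) ∧
    (∃ reps : Fin m → V, ∀ v : V, ∃! i : Fin m, ∃ g : G, ρ g (reps i) = v)

/-- The graph `Δ` on `Q₈ × {0,…,m−1}` built from the generators `i`, `j`: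
block `G_0` induces `Cay(G,{i,i²,i³})`, blocks `G_ℓ` (`1 ≤ ℓ ≤ m−3`) induce
`Cay(G,{i²})`, block `G_{m−2}` is empty, block `G_{m−1}` induces `Cay(G,{j,j⁻¹})`;
`g_ℓ` is adjacent to `g_{ℓ+1}` and `(ig)_{ℓ+1}` for `ℓ ≤ m−3`; and `g_{m−2}` is adjacent
to `g_{m−1}`, `(ig)_{m−1}` and `(jg)_{m−1}`. -/
def DeltaQ (G : Type*) [Group G] (m : ℕ) (i j : G) : SimpleGraph (G × Fin m) :=
  SimpleGraph.fromRel (fun p q =>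
    (p.2.val = 0 ∧ q.2.val = 0 ∧ q.1 * p.1⁻¹ ∈ ({i, i ^ 2, i ^ 3} : Set G)) ∨
    (1 ≤ p.2.val ∧ p.2.val ≤ m - 3 ∧ p.2 = q.2 ∧ q.1 * p.1⁻¹ = i ^ 2) ∨
    (p.2.val = m - 1 ∧ p.2 = q.2 ∧ q.1 * p.1⁻¹ ∈ ({j, j⁻¹} : Set G)) ∨
    (p.2.val ≤ m - 3 ∧ q.2.val = p.2.val + 1 ∧ (q.1 = p.1 ∨ q.1 = i * p.1)) ∨
    (p.2.val = m - 2 ∧ q.2.val = m - 1 ∧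
      (q.1 = p.1 ∨ q.1 = i * p.1 ∨ q.1 = j * p.1)))

/-!
Right translations preserve `Δ` because every defining condition only involves `q.1 * p.1⁻¹`.
Conversely, let `σ` be an automorphism. The block `G₀` is exactly the set of vertices lying in a
`K₄`: inside a block `Gₗ` with `ℓ ≥ 1` there are no triangles, a vertex of `Gₗ₊₁` has at most two
neighbours in `Gₗ` below block `m - 2`, and two adjacent blocks cannot carry a `K₄` split `2 + 2`
since `i² ≠ 1`. Since edges only join equal or consecutive blocks, applying this to `σ` and `σ⁻¹`
shows by induction that `σ` preserves every block, acting on `Gₗ` by some `fₗ : G → G`.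
In the top block, `Cay(G, {j, j⁻¹})`, the vertex `g_{m-2}` is the only common lower neighbour of
the edge `{g, jg}`, so `f_{m-1}` maps each such edge onto the edge over `f_{m-2}(g)`, possibly
reversing it, and `f_{m-1}(ig) = i f_{m-2}(g)`. Block `m - 3` forces `f_{m-2}` to map the pairs
`{g, ig}` to pairs of the same form, which rules out every reversal. Hence `f_{m-1} = f_{m-2}`
commutes with left multiplication by `i` and `j`, so it is right multiplication by some `c`, and
the pairs `{g_{ℓ+1}, (ig)_{ℓ+1}}` carry `fₗ(g) = g c` down to all lower blocks.
-/

theorem eq_mul_apply_one_of_map_mul_left {G : Type*} [Group G] {S : Set G}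
    (hS : Subgroup.closure S = ⊤) {f : G → G} (hf : ∀ s ∈ S, ∀ x, f (s * x) = s * f x) (x : G) :
    f x = x * f 1 := by
  have key : ∀ s ∈ Subgroup.closure S, ∀ y, f (s * y) = s * f y := by
    intro s hs
    induction hs using Subgroup.closure_induction with
    | mem s hs => exact hf s hs
    | one => simp
    | mul s t _ _ hs ht => intro y; rw [mul_assoc, hs, ht, mul_assoc]
    | inv s _ hs => intro y; rw [eq_inv_mul_iff_mul_eq, ← hs, mul_inv_cancel_left]
  simpa using key x (hS ▸ Subgroup.mem_top x) 1

theorem IsGraphAut.symm {V : Type*} {Γ : SimpleGraph V} {σ : Equiv.Perm V}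
    (hσ : IsGraphAut Γ σ) : IsGraphAut Γ σ.symm := fun u v => by
  rw [← hσ, Equiv.apply_symm_apply, Equiv.apply_symm_apply]

namespace Equiv.Perm

variable {α β : Type*}

def blockMap (σ : Perm (α × β)) (b : β) (x : α) : α := (σ (x, b)).1

variable {σ : Perm (α × β)} (hlev : ∀ v, (σ v).2 = v.2)
include hlev

theorem apply_eq_blockMap (x : α) (b : β) : σ (x, b) = (σ.blockMap b x, b) :=
  Prod.ext rfl (hlev _)

theorem blockMap_injective (b : β) : Function.Injective (σ.blockMap b) := fun x y h =>
  congrArg Prod.fst (σ.injective (show σ (x, b) = σ (y, b) by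
    rw [apply_eq_blockMap hlev, apply_eq_blockMap hlev, h]))

theorem _root_.IsGraphAut.adj_blockMap_iff {Γ : SimpleGraph (α × β)} (hσ : IsGraphAut Γ σ)
    {x y : α} {a b : β} : Γ.Adj (σ.blockMap a x, a) (σ.blockMap b y, b) ↔ Γ.Adj (x, a) (y, b) := by
  rw [← apply_eq_blockMap hlev, ← apply_eq_blockMap hlev]
  exact hσ _ _

end Equiv.Perm

/-! ### Quaternion pairs -/

structure IsQuaternionPair {G : Type*} [Group G] (i j : G) : Prop where
  pow_four : i ^ 4 = 1
  sq_ne_one : i ^ 2 ≠ 1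
  sq_eq : j ^ 2 = i ^ 2
  conj : j⁻¹ * i * j = i⁻¹

namespace IsQuaternionPair

variable {G : Type*} [Group G] {i j : G} (hq : IsQuaternionPair i j)
include hq

theorem orderOf_eq_four : orderOf i = 4 :=
  orderOf_eq_prime_pow (p := 2) (n := 1) (by simpa using hq.sq_ne_one) (by simpa using hq.pow_four)

theorem pow_ne_pow {k l : ℕ} (hk : k < 4) (hl : l < 4) (hkl : k ≠ l) : i ^ k ≠ i ^ l :=
  fun h => hkl (pow_injOn_Iio_orderOf (by simpa [hq.orderOf_eq_four] using hk)
    (by simpa [hq.orderOf_eq_four] using hl) h)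

theorem ne_one : i ≠ 1 := by
  simpa using hq.pow_ne_pow (k := 1) (l := 0) (by norm_num) (by norm_num)

theorem pow_three_ne_one : i ^ 3 ≠ 1 := by
  simpa using hq.pow_ne_pow (k := 3) (l := 0) (by norm_num) (by norm_num)

theorem pow_mul_pow_mul {k l : ℕ} (hkl : k + l = 4) (g : G) : i ^ k * (i ^ l * g) = g := by
  rw [← mul_assoc, ← pow_add, hkl, hq.pow_four, one_mul]

theorem not_commute : ¬ Commute i j := fun h => hq.sq_ne_one (by
  have hinv : i = i⁻¹ := by simpa [mul_assoc, h.eq] using hq.conj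
  rw [sq]
  nth_rw 2 [hinv]
  exact mul_inv_cancel i)

theorem ne_of_commute {w : G} (hw : Commute i w) : j ≠ w := by
  rintro rfl
  exact hq.not_commute hw

theorem right_ne_one : j ≠ 1 := hq.ne_of_commute (Commute.one_right i)

theorem ne_right : i ≠ j := (hq.ne_of_commute (Commute.refl i)).symm

theorem right_mul_ne_one : j * i ≠ 1 := fun h =>
  hq.ne_of_commute (Commute.refl i).inv_right (eq_inv_of_mul_eq_one_left h)

theorem right_mul_self : j * j = i ^ 2 := by rw [← sq, hq.sq_eq]

theorem right_mul_self_ne_one : j * j ≠ 1 := hq.right_mul_self ▸ hq.sq_ne_one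

theorem right_mul_self_ne_left : j * j ≠ i := fun h =>
  hq.ne_one (mul_eq_left.mp (by rw [← sq, ← hq.right_mul_self, h]))

theorem right_mul_self_ne_inv : j * j ≠ j⁻¹ := fun h =>
  hq.ne_of_commute ((Commute.refl i).pow_right 2).inv_right
    (by rw [← hq.right_mul_self, h, inv_inv])

theorem right_ne_sq : j ≠ i ^ 2 := hq.ne_of_commute ((Commute.refl i).pow_right 2)

end IsQuaternionPair

/-! ### Adjacency and degrees in `DeltaQ` -/

namespace DeltaQ

variable {G : Type*} [Group G] {m : ℕ} {i j : G}

theorem adj_mul_right (g : G) (p q : G × Fin m) :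
    (DeltaQ G m i j).Adj (p.1 * g, p.2) (q.1 * g, q.2) ↔ (DeltaQ G m i j).Adj p q := by
  simp [DeltaQ, Prod.ext_iff, ← mul_assoc]

theorem adj_level {g h : G} {a b : Fin m} (hadj : (DeltaQ G m i j).Adj (g, a) (h, b)) :
    b = a ∨ b.val = a.val + 1 ∨ a.val = b.val + 1 := by
  simp only [DeltaQ, SimpleGraph.fromRel_adj, Fin.ext_iff] at hadj
  omega

theorem adj_succ_iff {g h : G} {a b : Fin m} (hab : b.val = a.val + 1) :
    (DeltaQ G m i j).Adj (g, a) (h, b) ↔ h = g ∨ h = i * g ∨ (a.val = m - 2 ∧ h = j * g) := by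
  have := b.isLt
  simp only [DeltaQ, SimpleGraph.fromRel_adj, Fin.ext_iff, ne_eq, Prod.ext_iff]
  constructor
  · rintro ⟨-, (⟨h1, h2, -⟩ | ⟨-, -, h1, -⟩ | ⟨-, h1, -⟩ | ⟨-, -, hh⟩ | ⟨ha, -, hh⟩) | hrev⟩
    · omega
    · omega
    · omega
    · tauto
    · tauto
    · exfalso; omega
  · intro hh
    refine ⟨by omega, Or.inl ?_⟩
    rcases Nat.lt_or_ge a.val (m - 2) with ha | ha
    · have : a.val ≠ m - 2 := by omega
      exact Or.inr (Or.inr (Or.inr (Or.inl ⟨by omega, hab, by tauto⟩)))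
    · exact Or.inr (Or.inr (Or.inr (Or.inr ⟨by omega, by omega, by tauto⟩)))

theorem adj_same_iff (hq : IsQuaternionPair i j) (hm : 2 ≤ m) {g h : G} {a : Fin m} :
    (DeltaQ G m i j).Adj (g, a) (h, a) ↔
      (a.val = 0 ∧ (h = i * g ∨ h = i ^ 2 * g ∨ h = i ^ 3 * g)) ∨
      (1 ≤ a.val ∧ a.val ≤ m - 3 ∧ h = i ^ 2 * g) ∨
      (a.val = m - 1 ∧ (h = j * g ∨ h = j⁻¹ * g)) := by
  simp only [DeltaQ, SimpleGraph.fromRel_adj, Set.mem_insert_iff, Set.mem_singleton_iff,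
    mul_inv_eq_iff_eq_mul, ne_eq, Prod.mk.injEq, and_true, true_and]
  have := a.isLt
  constructor
  · rintro ⟨-, (⟨h0, -, hh⟩ | ⟨h1, h2, hh⟩ | ⟨htop, hh⟩ | ⟨-, hl, -⟩ | ⟨h1, h2, -⟩) |
      (⟨h0, -, hh⟩ | ⟨h1, h2, hh⟩ | ⟨htop, hh⟩ | ⟨-, hl, -⟩ | ⟨h1, h2, -⟩)⟩
    · exact Or.inl ⟨h0, hh⟩
    · exact Or.inr (Or.inl ⟨h1, h2, hh⟩)
    · exact Or.inr (Or.inr ⟨htop, hh⟩)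
    all_goals try (exfalso; omega)
    · refine Or.inl ⟨h0, ?_⟩
      rcases hh with rfl | rfl | rfl
      · exact Or.inr (Or.inr (by simpa using (hq.pow_mul_pow_mul (k := 3) (l := 1) rfl h).symm))
      · exact Or.inr (Or.inl (hq.pow_mul_pow_mul (k := 2) (l := 2) rfl h).symm)
      · exact Or.inl (by simpa using (hq.pow_mul_pow_mul (k := 1) (l := 3) rfl h).symm)
    · exact Or.inr (Or.inl ⟨h1, h2, hh ▸ (hq.pow_mul_pow_mul (k := 2) (l := 2) rfl h).symm⟩)
    · refine Or.inr (Or.inr ⟨htop, ?_⟩)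
      rcases hh with rfl | rfl
      · exact Or.inr (inv_mul_cancel_left j h).symm
      · exact Or.inl (mul_inv_cancel_left j h).symm
  · have hne : ∀ {c : G}, c ≠ 1 → h = c * g → ¬g = h := fun hc hh he =>
      hc (mul_eq_right.mp (hh ▸ he.symm))
    rintro (⟨h0, hh⟩ | ⟨h1, h2, hh⟩ | ⟨htop, hh⟩)
    · refine ⟨?_, Or.inl (Or.inl ⟨h0, h0, hh⟩)⟩
      rcases hh with hh | hh | hh
      exacts [hne hq.ne_one hh, hne hq.sq_ne_one hh, hne hq.pow_three_ne_one hh]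
    · exact ⟨hne hq.sq_ne_one hh, Or.inl (Or.inr (Or.inl ⟨h1, h2, hh⟩))⟩
    · refine ⟨?_, Or.inl (Or.inr (Or.inr (Or.inl ⟨htop, hh⟩)))⟩
      rcases hh with hh | hh
      exacts [hne hq.right_ne_one hh, hne (inv_ne_one.mpr hq.right_ne_one) hh]

theorem adj_iff (hq : IsQuaternionPair i j) (hm : 2 ≤ m) {g h : G} {a b : Fin m} :
    (DeltaQ G m i j).Adj (g, a) (h, b) ↔
      (b = a ∧ ((a.val = 0 ∧ (h = i * g ∨ h = i ^ 2 * g ∨ h = i ^ 3 * g)) ∨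
        (1 ≤ a.val ∧ a.val ≤ m - 3 ∧ h = i ^ 2 * g) ∨
        (a.val = m - 1 ∧ (h = j * g ∨ h = j⁻¹ * g)))) ∨
      (b.val = a.val + 1 ∧ (h = g ∨ h = i * g ∨ (a.val = m - 2 ∧ h = j * g))) ∨
      (a.val = b.val + 1 ∧ (h = g ∨ h = i⁻¹ * g ∨ (b.val = m - 2 ∧ h = j⁻¹ * g))) := by
  have down : ∀ {c : G}, g = c * h ↔ h = c⁻¹ * g := fun {c} => by
    rw [eq_inv_mul_iff_mul_eq, eq_comm]
  constructor
  · intro hadj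
    rcases adj_level hadj with rfl | hab | hab
    · exact Or.inl ⟨rfl, (adj_same_iff hq hm).mp hadj⟩
    · exact Or.inr (Or.inl ⟨hab, (adj_succ_iff hab).mp hadj⟩)
    · rw [SimpleGraph.adj_comm, adj_succ_iff hab, down, down, eq_comm] at hadj
      exact Or.inr (Or.inr ⟨hab, hadj⟩)
  · rintro (⟨rfl, hadj⟩ | ⟨hab, hadj⟩ | ⟨hab, hadj⟩)
    · exact (adj_same_iff hq hm).mpr hadj
    · exact (adj_succ_iff hab).mpr hadj
    · rwa [SimpleGraph.adj_comm, adj_succ_iff hab, down, down, eq_comm]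

theorem neighborSet_of_val_eq_zero (hq : IsQuaternionPair i j) (hm : 3 ≤ m) {g : G} {a : Fin m}
    (ha : a.val = 0) :
    (DeltaQ G m i j).neighborSet (g, a) =
      {(i * g, a), (i ^ 2 * g, a), (i ^ 3 * g, a), (g, ⟨1, by omega⟩), (i * g, ⟨1, by omega⟩)} := by
  ext ⟨h, b⟩
  simp only [SimpleGraph.mem_neighborSet, adj_iff hq (by omega : 2 ≤ m), Set.mem_insert_iff,
    Set.mem_singleton_iff, Prod.mk.injEq, Fin.ext_iff]
  grind

theorem neighborSet_of_one_le_val (hq : IsQuaternionPair i j) (hm : 3 ≤ m) {g : G} {a : Fin m}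
    (ha : 1 ≤ a.val ∧ a.val ≤ m - 3) :
    (DeltaQ G m i j).neighborSet (g, a) =
      {(i ^ 2 * g, a), (g, ⟨a.val - 1, by omega⟩), (i⁻¹ * g, ⟨a.val - 1, by omega⟩),
        (g, ⟨a.val + 1, by omega⟩), (i * g, ⟨a.val + 1, by omega⟩)} := by
  ext ⟨h, b⟩
  simp only [SimpleGraph.mem_neighborSet, adj_iff hq (by omega : 2 ≤ m), Set.mem_insert_iff,
    Set.mem_singleton_iff, Prod.mk.injEq, Fin.ext_iff]
  grind

theorem neighborSet_of_val_eq_sub_two (hq : IsQuaternionPair i j) (hm : 3 ≤ m) {g : G} {a : Fin m}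
    (ha : a.val = m - 2) :
    (DeltaQ G m i j).neighborSet (g, a) =
      {(g, ⟨m - 3, by omega⟩), (i⁻¹ * g, ⟨m - 3, by omega⟩), (g, ⟨m - 1, by omega⟩),
        (i * g, ⟨m - 1, by omega⟩), (j * g, ⟨m - 1, by omega⟩)} := by
  ext ⟨h, b⟩
  simp only [SimpleGraph.mem_neighborSet, adj_iff hq (by omega : 2 ≤ m), Set.mem_insert_iff,
    Set.mem_singleton_iff, Prod.mk.injEq, Fin.ext_iff]
  grind

theorem neighborSet_of_val_eq_sub_one (hq : IsQuaternionPair i j) (hm : 3 ≤ m) {g : G} {a : Fin m}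
    (ha : a.val = m - 1) :
    (DeltaQ G m i j).neighborSet (g, a) =
      {(j * g, a), (j⁻¹ * g, a), (g, ⟨m - 2, by omega⟩), (i⁻¹ * g, ⟨m - 2, by omega⟩),
        (j⁻¹ * g, ⟨m - 2, by omega⟩)} := by
  ext ⟨h, b⟩
  simp only [SimpleGraph.mem_neighborSet, adj_iff hq (by omega : 2 ≤ m), Set.mem_insert_iff,
    Set.mem_singleton_iff, Prod.mk.injEq, Fin.ext_iff]
  grind

theorem ncard_neighborSet (hq : IsQuaternionPair i j) (hm : 3 ≤ m) (v : G × Fin m) :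
    ((DeltaQ G m i j).neighborSet v).ncard = 5 := by
  obtain ⟨g, a⟩ := v
  have := a.isLt
  have h1 := hq.ne_one
  have h12 : i ≠ i ^ 2 := by simpa using hq.pow_ne_pow (k := 1) (l := 2) (by norm_num) (by norm_num)
  have h13 : i ≠ i ^ 3 := by simpa using hq.pow_ne_pow (k := 1) (l := 3) (by norm_num) (by norm_num)
  have h23 : i ^ 2 ≠ i ^ 3 := hq.pow_ne_pow (by norm_num) (by norm_num) (by norm_num)
  have hj := hq.right_ne_one
  have hij := hq.ne_right
  have hjj : j ≠ j⁻¹ := fun h => hq.right_mul_self_ne_one (by nth_rw 1 [h]; exact inv_mul_cancel j)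
  rcases (by omega : a.val = 0 ∨ (1 ≤ a.val ∧ a.val ≤ m - 3) ∨ a.val = m - 2 ∨ a.val = m - 1)
    with ha | ha | ha | ha <;>
    [rw [neighborSet_of_val_eq_zero hq hm ha]; rw [neighborSet_of_one_le_val hq hm ha];
      rw [neighborSet_of_val_eq_sub_two hq hm ha]; rw [neighborSet_of_val_eq_sub_one hq hm ha]] <;>
    rw [Set.ncard_insert_of_notMem, Set.ncard_insert_of_notMem, Set.ncard_insert_of_notMem,
      Set.ncard_insert_of_notMem, Set.ncard_singleton]
  all_goals simp [Prod.ext_iff, Fin.ext_iff, h1, h12, h13, h23, hj, hij, hjj, hij.symm]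
  all_goals omega

/-! ### Automorphisms preserve the blocks -/

theorem eq_or_eq_mul_of_adj_succ (hm : 3 ≤ m) {g h : G} {a b : Fin m}
    (hab : b.val = a.val + 1) (ha : a.val ≤ m - 3) (hadj : (DeltaQ G m i j).Adj (g, a) (h, b)) :
    h = g ∨ h = i * g := by
  rcases (adj_succ_iff hab).mp hadj with hh | hh | ⟨ha', -⟩
  · exact Or.inl hh
  · exact Or.inr hh
  · omega

theorem val_eq_zero_of_triangle (hq : IsQuaternionPair i j) (hm : 3 ≤ m) {p q r : G} {a : Fin m}
    (hpq : (DeltaQ G m i j).Adj (p, a) (q, a)) (hpr : (DeltaQ G m i j).Adj (p, a) (r, a))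
    (hqr : (DeltaQ G m i j).Adj (q, a) (r, a)) : a.val = 0 := by
  have hpr' : p ≠ r := fun h => hpr.ne (by rw [h])
  have hqr' : q ≠ r := fun h => hqr.ne (by rw [h])
  rw [adj_same_iff hq (by omega)] at hpq hpr hqr
  rcases hpq with ⟨h0, -⟩ | ⟨-, h2, rfl⟩ | ⟨htop, hpq⟩
  · exact h0
  · rcases hpr with ⟨h0, -⟩ | ⟨-, -, rfl⟩ | ⟨htop, -⟩
    · exact h0
    · exact absurd rfl hqr'
    · omega
  rcases hpr with ⟨h0, -⟩ | ⟨-, h2, -⟩ | ⟨-, hpr⟩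
  · exact h0
  · omega
  rcases hqr with ⟨h0, -⟩ | ⟨-, h2, -⟩ | ⟨-, hqr⟩
  · exact h0
  · omega
  exfalso
  have hj := hq.right_mul_self_ne_inv
  rcases hpq with rfl | rfl <;> rcases hpr with rfl | rfl <;> rcases hqr with h | h
  · exact hqr' rfl
  · exact hqr' rfl
  · exact hj (mul_right_cancel (by rw [mul_assoc]; exact h.symm))
  · exact hpr' (by rw [h, inv_mul_cancel_left])
  · exact hpr' (by rw [h, mul_inv_cancel_left])
  · have e : j = j⁻¹ * j⁻¹ := mul_right_cancel (h.trans (mul_assoc _ _ _).symm)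
    exact hj (by nth_rw 3 [e]; simp)
  · exact hqr' rfl
  · exact hqr' rfl

theorem false_of_three_adj_succ (hm : 3 ≤ m) {p q r s : G} {a b : Fin m}
    (hab : b.val = a.val + 1) (ha : a.val ≤ m - 3) (hpq : p ≠ q) (hpr : p ≠ r) (hqr : q ≠ r)
    (hp : (DeltaQ G m i j).Adj (p, a) (s, b)) (hq : (DeltaQ G m i j).Adj (q, a) (s, b))
    (hr : (DeltaQ G m i j).Adj (r, a) (s, b)) : False := by
  rcases eq_or_eq_mul_of_adj_succ hm hab ha hp with rfl | rfl <;>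
    rcases eq_or_eq_mul_of_adj_succ hm hab ha hq with h | h <;>
    rcases eq_or_eq_mul_of_adj_succ hm hab ha hr with h' | h'
  all_goals first
    | exact hpq h | exact hpr h' | exact hqr (h.symm.trans h')
    | exact hpq (mul_left_cancel h) | exact hpr (mul_left_cancel h')
    | exact hqr (mul_left_cancel (h.symm.trans h'))

theorem false_of_square_succ (hq : IsQuaternionPair i j) (hm : 3 ≤ m) {p q r s : G} {a b : Fin m}
    (hab : b.val = a.val + 1) (hrs : r ≠ s) (hpq : (DeltaQ G m i j).Adj (p, a) (q, a))
    (hpr : (DeltaQ G m i j).Adj (p, a) (r, b)) (hps : (DeltaQ G m i j).Adj (p, a) (s, b))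
    (hqr : (DeltaQ G m i j).Adj (q, a) (r, b)) (hqs : (DeltaQ G m i j).Adj (q, a) (s, b)) :
    False := by
  have hpq' : p ≠ q := fun h => hpq.ne (by rw [h])
  have ha : a.val ≤ m - 3 := by
    have := b.isLt
    rcases (adj_same_iff hq (by omega)).mp hpq with ⟨h0, -⟩ | ⟨-, h2, -⟩ | ⟨htop, -⟩ <;> omega
  have key : ∀ t, (DeltaQ G m i j).Adj (p, a) (t, b) → (DeltaQ G m i j).Adj (q, a) (t, b) →
      (t = p ∧ p = i * q) ∨ (t = q ∧ q = i * p) := by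
    intro t hp hq
    rcases eq_or_eq_mul_of_adj_succ hm hab ha hp with rfl | rfl <;>
      rcases eq_or_eq_mul_of_adj_succ hm hab ha hq with h | h
    · exact absurd h hpq'
    · exact Or.inl ⟨rfl, h⟩
    · exact Or.inr ⟨h, h.symm⟩
    · exact absurd (mul_left_cancel h) hpq'
  rcases key r hpr hqr with ⟨rfl, h⟩ | ⟨rfl, h⟩ <;> rcases key s hps hqs with ⟨rfl, h'⟩ | ⟨rfl, h'⟩
  · exact hrs rfl
  · exact hq.sq_ne_one (mul_eq_right.mp (by rw [sq, mul_assoc, ← h', ← h]))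
  · exact hq.sq_ne_one (mul_eq_right.mp (by rw [sq, mul_assoc, ← h', ← h]))
  · exact hrs rfl

theorem false_of_K4_succ (hq : IsQuaternionPair i j) (hm : 3 ≤ m) {v u w x : G × Fin m}
    (hlev : u.2.val = v.2.val + 1)
    (hvu : (DeltaQ G m i j).Adj v u) (hvw : (DeltaQ G m i j).Adj v w)
    (hvx : (DeltaQ G m i j).Adj v x) (huw : (DeltaQ G m i j).Adj u w)
    (hux : (DeltaQ G m i j).Adj u x) (hwx : (DeltaQ G m i j).Adj w x) : False := by
  have level : ∀ y : G × Fin m, (DeltaQ G m i j).Adj v y → (DeltaQ G m i j).Adj u y →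
      y.2 = v.2 ∨ y.2 = u.2 := by
    intro y hv hu
    have := adj_level hv
    have := adj_level hu
    simp only [Fin.ext_iff] at *
    omega
  obtain ⟨g, a⟩ := v
  obtain ⟨h, b⟩ := u
  obtain ⟨wg, wa⟩ := w
  obtain ⟨xg, xa⟩ := x
  dsimp only at hlev
  have fst_ne : ∀ {y z : G} {c : Fin m}, (DeltaQ G m i j).Adj (y, c) (z, c) → y ≠ z :=
    fun hyz e => hyz.ne (by rw [e])
  rcases level _ hvw huw with rfl | rfl <;> rcases level _ hvx hux with rfl | rfl
  · have h0 := val_eq_zero_of_triangle hq hm hvw hvx hwx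
    exact false_of_three_adj_succ hm hlev (by omega) (fst_ne hvw) (fst_ne hvx) (fst_ne hwx)
      hvu huw.symm hux.symm
  · exact false_of_square_succ hq hm hlev (fst_ne hux) hvw hvu hvx huw.symm hwx
  · exact false_of_square_succ hq hm hlev (fst_ne huw) hvx hvu hvw hux.symm hwx.symm
  · have := val_eq_zero_of_triangle hq hm huw hux hwx
    omega

theorem val_eq_zero_of_K4 (hq : IsQuaternionPair i j) (hm : 3 ≤ m) {v u w x : G × Fin m}
    (hvu : (DeltaQ G m i j).Adj v u) (hvw : (DeltaQ G m i j).Adj v w)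
    (hvx : (DeltaQ G m i j).Adj v x) (huw : (DeltaQ G m i j).Adj u w)
    (hux : (DeltaQ G m i j).Adj u x) (hwx : (DeltaQ G m i j).Adj w x) : v.2.val = 0 := by
  have hu : u.2 = v.2 := by
    rcases adj_level hvu with h | h | h
    · exact h
    · exact (false_of_K4_succ hq hm h hvu hvw hvx huw hux hwx).elim
    · exact (false_of_K4_succ hq hm h hvu.symm huw hux hvw hvx hwx).elim
  have hw : w.2 = v.2 := by
    rcases adj_level hvw with h | h | h
    · exact h
    · exact (false_of_K4_succ hq hm h hvw hvu hvx huw.symm hwx hux).elim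
    · exact (false_of_K4_succ hq hm h hvw.symm huw.symm hwx hvu hvx hux).elim
  obtain ⟨g, a⟩ := v
  obtain ⟨h, b⟩ := u
  obtain ⟨wg, wa⟩ := w
  dsimp only at hu hw ⊢
  subst hu hw
  exact val_eq_zero_of_triangle hq hm hvu hvw huw

theorem val_snd_apply_eq_zero (hq : IsQuaternionPair i j) (hm : 3 ≤ m)
    {σ : Equiv.Perm (G × Fin m)} (hσ : IsGraphAut (DeltaQ G m i j) σ) {g : G} {a : Fin m}
    (ha : a.val = 0) : (σ (g, a)).2.val = 0 := by
  have adj : ∀ {x y : G}, (y = i * x ∨ y = i ^ 2 * x ∨ y = i ^ 3 * x) →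
      (DeltaQ G m i j).Adj (σ (x, a)) (σ (y, a)) :=
    fun h => (hσ _ _).mpr ((adj_same_iff hq (by omega)).mpr (Or.inl ⟨ha, h⟩))
  exact val_eq_zero_of_K4 hq hm (adj (Or.inl rfl)) (adj (Or.inr (Or.inl rfl)))
    (adj (Or.inr (Or.inr rfl))) (adj (Or.inl (by rw [← mul_assoc, ← sq])))
    (adj (Or.inr (Or.inl (by rw [← mul_assoc, ← pow_succ]))))
    (adj (Or.inl (by rw [← mul_assoc, ← pow_succ'])))

theorem snd_apply_eq (hq : IsQuaternionPair i j) (hm : 3 ≤ m)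
    {σ : Equiv.Perm (G × Fin m)} (hσ : IsGraphAut (DeltaQ G m i j) σ) (v : G × Fin m) :
    (σ v).2 = v.2 := by
  suffices h : ∀ k, ∀ σ : Equiv.Perm (G × Fin m), IsGraphAut (DeltaQ G m i j) σ →
      ∀ v : G × Fin m, v.2.val = k → (σ v).2.val = k from Fin.ext (h _ σ hσ v rfl)
  intro k
  induction k using Nat.strong_induction_on with
  | _ k ih =>
  rintro σ hσ ⟨g, a⟩ hk
  dsimp only at hk ⊢
  subst hk
  rcases Nat.eq_zero_or_pos a.val with h0 | hpos
  · rw [h0]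
    exact val_snd_apply_eq_zero hq hm hσ h0
  -- `σ` cannot lower `(g, a)`, because `σ⁻¹` preserves the lower blocks as well
  let b : Fin m := ⟨a.val - 1, by omega⟩
  have hb : a.val = b.val + 1 := by simp only [b]; omega
  have hσb : (σ (g, b)).2.val = b.val := ih _ (by omega) σ hσ _ rfl
  have hlevel := adj_level ((hσ (g, b) (g, a)).mpr ((adj_succ_iff hb).mpr (Or.inl rfl)))
  have hnot_lt : ¬ (σ (g, a)).2.val < a.val := fun hlt => by
    have := ih _ hlt σ.symm hσ.symm (σ (g, a)) rfl
    simp only [Equiv.symm_apply_apply] at this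
    omega
  simp only [Fin.ext_iff, Equiv.toFun_as_coe] at hlevel
  omega

/-! ### Rigidity -/

theorem eq_of_adj_of_adj_mul_left (hq : IsQuaternionPair i j) (hm : 3 ≤ m) {w g : G}
    {a b : Fin m} (ha : a.val = m - 2) (hb : b.val = m - 1)
    (hg : (DeltaQ G m i j).Adj (w, a) (g, b)) (hjg : (DeltaQ G m i j).Adj (w, a) (j * g, b)) :
    w = g := by
  have hab : b.val = a.val + 1 := by omega
  rw [adj_succ_iff hab] at hg hjg
  rcases hg with rfl | rfl | ⟨-, rfl⟩
  · rfl
  all_goals exfalso; rcases hjg with h | h | ⟨-, h⟩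
  · exact hq.right_mul_ne_one (mul_eq_right.mp (by rw [mul_assoc]; exact h))
  · exact hq.right_ne_one (mul_eq_right.mp (mul_right_cancel (by rw [mul_assoc]; exact h)))
  · exact hq.ne_one (mul_eq_left.mp (mul_right_cancel (by rw [mul_assoc]; exact h)))
  · exact hq.right_mul_self_ne_one (mul_eq_right.mp (by rw [mul_assoc]; exact h))
  · exact hq.right_mul_self_ne_left (mul_right_cancel (by rw [mul_assoc]; exact h))
  · exact hq.right_ne_one (mul_eq_left.mp (mul_right_cancel (by rw [mul_assoc]; exact h)))

section Rigidity

variable {σ : Equiv.Perm (G × Fin m)} (hσ : IsGraphAut (DeltaQ G m i j) σ)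
  (hlev : ∀ v, (σ v).2 = v.2)
include hσ hlev

theorem blockMap_succ_cases (hq : IsQuaternionPair i j) (hm : 3 ≤ m) {a b : Fin m}
    (hab : b.val = a.val + 1) (ha : a.val ≤ m - 3) (x : G) :
    (σ.blockMap b x = σ.blockMap a x ∧ σ.blockMap b (i * x) = i * σ.blockMap a x) ∨
      (σ.blockMap b x = i * σ.blockMap a x ∧ σ.blockMap b (i * x) = σ.blockMap a x) := by
  have up : ∀ {y}, (y = x ∨ y = i * x) → (σ.blockMap b y = σ.blockMap a x ∨
      σ.blockMap b y = i * σ.blockMap a x) := fun hy =>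
    eq_or_eq_mul_of_adj_succ hm hab ha
      ((hσ.adj_blockMap_iff hlev).mpr ((adj_succ_iff hab).mpr (hy.imp_right Or.inl)))
  have hne : σ.blockMap b x ≠ σ.blockMap b (i * x) :=
    (Equiv.Perm.blockMap_injective hlev b).ne (fun h => hq.ne_one (mul_eq_right.mp h.symm))
  rcases up (Or.inl rfl) with h | h <;> rcases up (Or.inr rfl) with h' | h'
  · exact absurd (h.trans h'.symm) hne
  · exact Or.inl ⟨h, h'⟩
  · exact Or.inr ⟨h, h'⟩
  · exact absurd (h.trans h'.symm) hne

theorem blockMap_top_cases (hq : IsQuaternionPair i j) (hm : 3 ≤ m) {a b : Fin m}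
    (ha : a.val = m - 2) (hb : b.val = m - 1) (x : G) :
    σ.blockMap b (i * x) = i * σ.blockMap a x ∧
      ((σ.blockMap a x = σ.blockMap b x ∧ σ.blockMap b (j * x) = j * σ.blockMap a x) ∨
        (σ.blockMap a x = σ.blockMap b (j * x) ∧ σ.blockMap b x = j * σ.blockMap a x)) := by
  have hab : b.val = a.val + 1 := by omega
  have up : ∀ {y}, (y = x ∨ y = i * x ∨ y = j * x) →
      (DeltaQ G m i j).Adj (σ.blockMap a x, a) (σ.blockMap b y, b) := fun hy =>
    (hσ.adj_blockMap_iff hlev).mpr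
      ((adj_succ_iff hab).mpr (hy.imp_right (Or.imp_right (⟨ha, ·⟩))))
  have htop : σ.blockMap b (j * x) = j * σ.blockMap b x ∨
      σ.blockMap b (j * x) = j⁻¹ * σ.blockMap b x := by
    have := (hσ.adj_blockMap_iff hlev (x := x) (y := j * x)).mpr
      ((adj_same_iff hq (by omega)).mpr (Or.inr (Or.inr ⟨hb, Or.inl rfl⟩)))
    rcases (adj_same_iff hq (by omega)).mp this with ⟨h0, -⟩ | ⟨-, h2, -⟩ | ⟨-, h⟩
    · omega
    · omega
    · exact h
  have hcases :
      (σ.blockMap a x = σ.blockMap b x ∧ σ.blockMap b (j * x) = j * σ.blockMap a x) ∨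
      (σ.blockMap a x = σ.blockMap b (j * x) ∧ σ.blockMap b x = j * σ.blockMap a x) := by
    rcases htop with h | h
    · have e :=
        eq_of_adj_of_adj_mul_left hq hm ha hb (up (Or.inl rfl)) (h ▸ up (Or.inr (Or.inr rfl)))
      exact Or.inl ⟨e, by rw [h, e]⟩
    · have h' : σ.blockMap b x = j * σ.blockMap b (j * x) := by rw [h, mul_inv_cancel_left]
      have e :=
        eq_of_adj_of_adj_mul_left hq hm ha hb (up (Or.inr (Or.inr rfl))) (h' ▸ up (Or.inl rfl))
      exact Or.inr ⟨e, by rw [h', e]⟩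
  refine ⟨?_, hcases⟩
  have inj := Equiv.Perm.blockMap_injective hlev b
  have hix : i * x ≠ x := fun h => hq.ne_one (mul_eq_right.mp h)
  have hijx : i * x ≠ j * x := fun h => hq.ne_right (mul_right_cancel h)
  rcases (adj_succ_iff hab).mp (up (Or.inr (Or.inl rfl))) with h | h | ⟨-, h⟩
  · rcases hcases with ⟨e, -⟩ | ⟨e, -⟩
    · exact absurd (inj (h.trans e)) hix
    · exact absurd (inj (h.trans e)) hijx
  · exact h
  · rcases hcases with ⟨-, e⟩ | ⟨-, e⟩
    · exact absurd (inj (h.trans e.symm)) hijx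
    · exact absurd (inj (h.trans e.symm)) hix

theorem exists_blockMap_top_eq_mul_right (hq : IsQuaternionPair i j) (hm : 3 ≤ m)
    (hgen : Subgroup.closure {i, j} = ⊤) {k a b : Fin m} (hk : k.val = m - 3)
    (ha : a.val = m - 2) (hb : b.val = m - 1) :
    ∃ c, ∀ x, σ.blockMap b x = x * c ∧ σ.blockMap a x = x * c := by
  have top := blockMap_top_cases hσ hlev hq hm ha hb
  have succ : ∀ x, σ.blockMap a (i * x) = i * σ.blockMap a x ∨
      σ.blockMap a x = i * σ.blockMap a (i * x) := fun x => by
    rcases blockMap_succ_cases hσ hlev hq hm (a := k) (b := a) (by omega) (by omega) x with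
      ⟨h, h'⟩ | ⟨h, h'⟩
    · exact Or.inl (by rw [h, h'])
    · exact Or.inr (by rw [h, h'])
  -- a reversed top edge over `y` would force `j = 1` or `j = i ^ 2`
  have not_rev : ∀ y, σ.blockMap b y ≠ j * σ.blockMap a y := by
    intro y hy
    have hx := (top (i⁻¹ * y)).1
    rw [mul_inv_cancel_left] at hx
    rcases succ (i⁻¹ * y) with h | h <;> rw [mul_inv_cancel_left] at h
    · rw [hx, h, ← mul_assoc] at hy
      exact hq.right_ne_one (mul_eq_right.mp (mul_right_cancel hy).symm)
    · rw [hx, h, ← mul_assoc, ← sq] at hy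
      exact hq.right_ne_sq (mul_right_cancel hy).symm
  have straight :
      ∀ y, σ.blockMap a y = σ.blockMap b y ∧ σ.blockMap b (j * y) = j * σ.blockMap b y := by
    intro y
    rcases (top y).2 with ⟨e, h⟩ | ⟨-, h⟩
    · exact ⟨e, by rw [h, e]⟩
    · exact absurd h (not_rev y)
  have hL : ∀ s ∈ ({i, j} : Set G), ∀ y, σ.blockMap b (s * y) = s * σ.blockMap b y := by
    rintro s (rfl | rfl) y
    · rw [(top y).1, (straight y).1]
    · exact (straight y).2
  exact ⟨σ.blockMap b 1, fun x => ⟨eq_mul_apply_one_of_map_mul_left hgen hL x,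
    (straight x).1.trans (eq_mul_apply_one_of_map_mul_left hgen hL x)⟩⟩

theorem blockMap_eq_mul_right_of_succ (hq : IsQuaternionPair i j) (hm : 3 ≤ m) {a b : Fin m}
    (hab : b.val = a.val + 1) (ha : a.val ≤ m - 3) {c : G} (hc : ∀ x, σ.blockMap b x = x * c)
    (x : G) : σ.blockMap a x = x * c := by
  rcases blockMap_succ_cases hσ hlev hq hm hab ha x with ⟨h, -⟩ | ⟨h, h'⟩
  · rw [← h, hc]
  · rw [hc] at h h'
    refine absurd ((mul_eq_right (b := x * c)).mp ?_) hq.sq_ne_one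
    nth_rw 2 [h]
    rw [← h', sq]
    simp only [mul_assoc]

end Rigidity

theorem exists_mul_right_of_isGraphAut (hq : IsQuaternionPair i j) (hm : 3 ≤ m)
    (hgen : Subgroup.closure {i, j} = ⊤) {σ : Equiv.Perm (G × Fin m)}
    (hσ : IsGraphAut (DeltaQ G m i j) σ) : ∃ c, ∀ p, σ p = (p.1 * c, p.2) := by
  have hlev := snd_apply_eq hq hm hσ
  obtain ⟨c, hc⟩ := exists_blockMap_top_eq_mul_right hσ hlev hq hm hgen
    (k := ⟨m - 3, by omega⟩) (a := ⟨m - 2, by omega⟩) (b := ⟨m - 1, by omega⟩) rfl rfl rfl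
  have below : ∀ d (a : Fin m), a.val + d = m - 2 → ∀ x, σ.blockMap a x = x * c := by
    intro d
    induction d with
    | zero =>
      intro a ha x
      rw [show a = ⟨m - 2, by omega⟩ from Fin.ext (by simpa using ha)]
      exact (hc x).2
    | succ d ih =>
      intro a ha
      exact blockMap_eq_mul_right_of_succ hσ hlev hq hm (b := ⟨a.val + 1, by omega⟩) rfl
        (by omega) (ih _ (by simp only; omega))
  refine ⟨c, fun ⟨x, a⟩ => ?_⟩
  rw [Equiv.Perm.apply_eq_blockMap hlev]
  rcases (by omega : a.val = m - 1 ∨ a.val ≤ m - 2) with ha | ha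
  · rw [show a = ⟨m - 1, by omega⟩ from Fin.ext ha, (hc x).1]
  · rw [below (m - 2 - a.val) a (by omega) x]

end DeltaQ

/-! ### The `m`-GRR -/

theorem sq_ne_one_of_closure_eq_top {G : Type*} [Group G] {i j : G} (hrel : j⁻¹ * i * j = i⁻¹)
    (hgen : Subgroup.closure {i, j} = ⊤) {x y : G} (hxy : x * y ≠ y * x) : i ^ 2 ≠ 1 := by
  intro hi
  have hinv : i⁻¹ = i := inv_eq_of_mul_eq_one_right (by rw [← sq, hi])
  have hij : i * j = j * i := by
    rw [hinv] at hrel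
    simpa [mul_assoc] using congrArg (j * ·) hrel
  have := Subgroup.isMulCommutative_closure (k := {i, j}) (by
    rintro a (rfl | rfl) b (rfl | rfl) <;> simp [hij])
  exact hxy (setLike_mul_comm (hgen ▸ Subgroup.mem_top x) (hgen ▸ Subgroup.mem_top y))

def rightTranslation (G : Type*) [Group G] (β : Type*) : G →* Equiv.Perm (G × β) where
  toFun g := (Equiv.mulRight g⁻¹).prodCongr (Equiv.refl β)
  map_one' := by ext <;> simp
  map_mul' a b := by ext <;> simp [mul_assoc]

theorem rightTranslation_apply {G : Type*} [Group G] {β : Type*} (g : G) (p : G × β) :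
    rightTranslation G β g p = (p.1 * g⁻¹, p.2) := rfl

theorem DeltaQ.hasMGRR {G : Type} [Group G] [Fintype G] {m : ℕ} {i j : G}
    (hq : IsQuaternionPair i j) (hm : 3 ≤ m) (hgen : Subgroup.closure {i, j} = ⊤) :
    HasMGRR G m := by
  refine ⟨G × Fin m, inferInstance, DeltaQ G m i j, rightTranslation G (Fin m),
    ⟨5, DeltaQ.ncard_neighborSet hq hm⟩, fun g u v => DeltaQ.adj_mul_right g⁻¹ u v,
    fun σ hσ => ?_, fun a b hab => ?_, fun g v hv => ?_,
    ⟨fun k => (1, k), fun v =>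
      ⟨v.2, ⟨v.1⁻¹, by rw [rightTranslation_apply, inv_inv, one_mul]⟩, ?_⟩⟩⟩
  · obtain ⟨c, hc⟩ := DeltaQ.exists_mul_right_of_isGraphAut hq hm hgen hσ
    exact ⟨c⁻¹, Equiv.ext fun p => by rw [rightTranslation_apply, hc, inv_inv]⟩
  · have := congrArg (fun σ => (σ (1, ⟨0, by omega⟩)).1) hab
    simpa only [rightTranslation_apply, one_mul, inv_inj] using this
  · simpa [rightTranslation_apply] using congrArg Prod.fst hv
  · rintro k ⟨g, hg⟩
    exact congrArg Prod.snd hg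

/-- for every `m ≥ 3` and generators `i`, `j` of `Q₈` satisfying the defining
relations, the automorphism group of `Δ` is exactly the group of right translations of
`Q₈`; in particular `Q₈` admits an m-GRR. -/
theorem statement_15 (m : ℕ) (hm : 3 ≤ m)
    (i j : QuaternionGroup 2)
    (hi4 : i ^ 4 = 1) (hj2 : j ^ 2 = i ^ 2) (hrel : j⁻¹ * i * j = i⁻¹)
    (hgen : Subgroup.closure ({i, j} : Set (QuaternionGroup 2)) = ⊤) :
    ((∀ (g : QuaternionGroup 2) (p q : QuaternionGroup 2 × Fin m),
        (DeltaQ (QuaternionGroup 2) m i j).Adj (p.1 * g, p.2) (q.1 * g, q.2) ↔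
          (DeltaQ (QuaternionGroup 2) m i j).Adj p q) ∧
      (∀ σ : Equiv.Perm (QuaternionGroup 2 × Fin m),
        IsGraphAut (DeltaQ (QuaternionGroup 2) m i j) σ →
          ∃ g : QuaternionGroup 2, ∀ p, σ p = (p.1 * g, p.2))) ∧
    HasMGRR (QuaternionGroup 2) m := by
  have hq : IsQuaternionPair i j := ⟨hi4, sq_ne_one_of_closure_eq_top hrel hgen
    (x := .a 1) (y := .xa 0) (by decide), hj2, hrel⟩
  exact ⟨⟨DeltaQ.adj_mul_right, fun _ hσ => DeltaQ.exists_mul_right_of_isGraphAut hq hm hgen hσ⟩,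
    DeltaQ.hasMGRR hq hm hgen⟩
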